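/- arXiv:2512.01741 — 6 statements merged into one kernel-verified Lean document; each statement's English description precedes it below -/
import Mathlib

section
/- Let H and H′ be real inner product spaces, K a linear subspace of H, G : H → H′ a linear map, and S : H → H a linear map satisfying ⟪S x, x⟫ = 0 for all x ∈ H. Let α > 0 and k > 0, and let m, h ∈ H and v ∈ K be such that for every φ ∈ K one has α⟪v, φ⟫ + ⟪S v, φ⟫ + (k/2)⟪G v, G φ⟫ = −⟪G m, G φ⟫ + ⟪h, φ⟫. Then, setting m′ := m + k v, one has the discrete energy identity (1/2)‖G m′‖² + α k ‖v‖² = (1/2)‖G m‖² + k ⟪h, v⟫. -/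
open RealInnerProductSpace

theorem stmt_0
    {H H' : Type*}
    [NormedAddCommGroup H] [InnerProductSpace ℝ H]
    [NormedAddCommGroup H'] [InnerProductSpace ℝ H']
    (K : Submodule ℝ H) (G : H →ₗ[ℝ] H') (S : H →ₗ[ℝ] H)
    (hS : ∀ x : H, ⟪S x, x⟫ = 0)
    (α k : ℝ) (hα : 0 < α) (hk : 0 < k)
    (m h : H) (v : H) (hv : v ∈ K)
    (heq : ∀ φ ∈ K,
      α * ⟪v, φ⟫ + ⟪S v, φ⟫ + (k / 2) * ⟪G v, G φ⟫
        = -⟪G m, G φ⟫ + ⟪h, φ⟫) :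
    (1 / 2) * ‖G (m + k • v)‖ ^ 2 + α * k * ‖v‖ ^ 2
      = (1 / 2) * ‖G m‖ ^ 2 + k * ⟪h, v⟫ := by
  have h1 := heq v hv
  rw [hS v] at h1
  have hvv : ⟪v, v⟫ = ‖v‖ ^ 2 := real_inner_self_eq_norm_sq v
  have hexp : ‖G (m + k • v)‖ ^ 2
      = ‖G m‖ ^ 2 + 2 * ⟪G m, k • G v⟫ + ‖k • G v‖ ^ 2 := by
    rw [map_add, map_smul]
    exact norm_add_sq_real _ _
  rw [hexp]
  rw [real_inner_smul_right, norm_smul]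
  have hGvv : ⟪G v, G v⟫ = ‖G v‖ ^ 2 := real_inner_self_eq_norm_sq _
  rw [hvv] at h1
  have hnk : ‖k‖ = k := abs_of_pos hk
  rw [hnk]
  have h2 : k * (α * ‖v‖ ^ 2 + 0 + k / 2 * ⟪G v, G v⟫)
      = k * (-⟪G m, G v⟫ + ⟪h, v⟫) := by rw [h1]
  rw [hGvv] at h2
  nlinarith [h2]
end

section
/- Let H and H′ be real inner product spaces, K a linear subspace of H, G : H → H′ a linear map, and S : H → H a linear map satisfying ⟪S x, x⟫ = 0 for all x ∈ H. Let α > 0 and k > 0, and let m, h ∈ H and v ∈ K be such that for every φ ∈ K one has α⟪v, φ⟫ + ⟪S v, φ⟫ + (k/2)⟪G v, G φ⟫ = −⟪G m, G φ⟫ + ⟪h, φ⟫. Then, setting m′ := m + k v, one has the stability estimate (1/2)‖G m′‖² + (α k / 2)‖v‖² ≤ (1/2)‖G m‖² + (k/(2α))‖h‖². -/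
open RealInnerProductSpace

theorem stmt_1
    {H H' : Type*}
    [NormedAddCommGroup H] [InnerProductSpace ℝ H]
    [NormedAddCommGroup H'] [InnerProductSpace ℝ H']
    (K : Submodule ℝ H) (G : H →ₗ[ℝ] H') (S : H →ₗ[ℝ] H)
    (hS : ∀ x : H, ⟪S x, x⟫ = 0)
    (α k : ℝ) (hα : 0 < α) (hk : 0 < k)
    (m h : H) (v : H) (hv : v ∈ K)
    (heq : ∀ φ ∈ K,
      α * ⟪v, φ⟫ + ⟪S v, φ⟫ + (k / 2) * ⟪G v, G φ⟫
        = -⟪G m, G φ⟫ + ⟪h, φ⟫) :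
    (1 / 2) * ‖G (m + k • v)‖ ^ 2 + (α * k / 2) * ‖v‖ ^ 2
      ≤ (1 / 2) * ‖G m‖ ^ 2 + (k / (2 * α)) * ‖h‖ ^ 2 := by
  have key := heq v hv
  rw [hS v, real_inner_self_eq_norm_sq, real_inner_self_eq_norm_sq] at key
  have hGm : ‖G (m + k • v)‖ ^ 2
      = ‖G m‖ ^ 2 + 2 * (k * ⟪G m, G v⟫) + k ^ 2 * ‖G v‖ ^ 2 := by
    rw [map_add, map_smul, norm_add_sq_real, real_inner_smul_right, norm_smul]
    simp only [Real.norm_eq_abs, mul_pow, sq_abs]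
    try ring
  have hy : ⟪h, v⟫ ≤ (α / 2) * ‖v‖ ^ 2 + (1 / (2 * α)) * ‖h‖ ^ 2 := by
    have h1 : ⟪h, v⟫ ≤ ‖h‖ * ‖v‖ := real_inner_le_norm h v
    have h2 : (0:ℝ) ≤ (α * ‖v‖ - ‖h‖) ^ 2 := sq_nonneg _
    have h3 : ‖h‖ * ‖v‖ ≤ (α / 2) * ‖v‖ ^ 2 + (1 / (2 * α)) * ‖h‖ ^ 2 := by
      rw [← sub_nonneg]
      have he : (α / 2) * ‖v‖ ^ 2 + (1 / (2 * α)) * ‖h‖ ^ 2 - ‖h‖ * ‖v‖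
          = (α * ‖v‖ - ‖h‖) ^ 2 / (2 * α) := by
        field_simp
        ring
      rw [he]
      positivity
    linarith
  have h4 : k * ⟪h, v⟫ ≤ k * ((α / 2) * ‖v‖ ^ 2 + (1 / (2 * α)) * ‖h‖ ^ 2) :=
    mul_le_mul_of_nonneg_left hy hk.le
  have h5 : k * (α * ‖v‖ ^ 2 + 0 + k / 2 * ‖G v‖ ^ 2)
      = k * (-⟪G m, G v⟫ + ⟪h, v⟫) := by rw [key]
  have hαne : α ≠ 0 := ne_of_gt hα
  rw [hGm]
  ring_nf at h4 h5 ⊢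
  linarith [h4, h5]
end

section
/- Let H and H′ be real inner product spaces, G : H → H′ a linear map, α > 0, k > 0, M ≥ 0, c ≥ 0, and let j ≥ 2 be an integer. Let m⁰, …, m^j ∈ H, v², …, v^j ∈ H, h¹, …, h^{j−1} ∈ H and nonnegative reals b₀, …, b_{j−1} be given, and suppose that for each i = 1, …, j−1: (a) m^{i+1} = m^i + k v^{i+1}; (b) there exist a linear subspace K_i of H containing v^{i+1} and a linear map S_i : H → H with ⟪S_i x, x⟫ = 0 for all x, such that for every φ ∈ K_i one has α⟪v^{i+1}, φ⟫ + ⟪S_i v^{i+1}, φ⟫ + (k/2)⟪G v^{i+1}, G φ⟫ = −⟪G m^i, G φ⟫ + ⟪h^i, φ⟫; (c) ‖h^i‖² ≤ M((9/2) b_i + (1/4) b_{i−1} + c). Then (1/2)‖G m^j‖² + (α k / 2) Σ_{i=1}^{j−1} ‖v^{i+1}‖² ≤ (1/2)‖G m¹‖² + (M k /(2α)) Σ_{i=0}^{j−1} (5 b_i + c). -/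
open RealInnerProductSpace

open Finset

/-
Testing the scheme with its own solution φ = v^{i+1} kills the skew term, and since
k/2 ⟪G v, G φ⟫ + ⟪G m^i, G φ⟫ = ⟪G m^{i+1/2}, G φ⟫ with the midpoint m^{i+1/2} = (m^i + m^{i+1})/2,
the exchange term is exactly the increment of the energy ½‖G m‖². Young's inequality absorbs
the forcing into half of the damping, and summing the one-step estimates telescopes.
-/

theorem real_inner_le_norm_sq_div_add {E : Type*} [NormedAddCommGroup E] [InnerProductSpace ℝ E]
    {α : ℝ} (hα : 0 < α) (x y : E) :
    ⟪x, y⟫ ≤ ‖x‖ ^ 2 / (2 * α) + α / 2 * ‖y‖ ^ 2 := by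
  have hyoung : ‖x‖ * ‖y‖ ≤ ‖x‖ ^ 2 / (2 * α) + α / 2 * ‖y‖ ^ 2 := by
    have hsq : 0 ≤ (‖x‖ - α * ‖y‖) ^ 2 / (2 * α) := by positivity
    have expand : (‖x‖ - α * ‖y‖) ^ 2 / (2 * α)
        = ‖x‖ ^ 2 / (2 * α) + α / 2 * ‖y‖ ^ 2 - ‖x‖ * ‖y‖ := by
      field_simp
      ring
    linarith
  exact (real_inner_le_norm x y).trans hyoung

section Scheme

variable {H H' : Type*} [NormedAddCommGroup H] [InnerProductSpace ℝ H]
  [NormedAddCommGroup H'] [InnerProductSpace ℝ H'] (G : H →ₗ[ℝ] H')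

theorem half_norm_sq_map_add_smul_eq {α k : ℝ} {m v h : H}
    (hv : α * ‖v‖ ^ 2 + (k / 2) * ‖G v‖ ^ 2 = -⟪G m, G v⟫ + ⟪h, v⟫) :
    (1 / 2) * ‖G (m + k • v)‖ ^ 2 + α * k * ‖v‖ ^ 2 = (1 / 2) * ‖G m‖ ^ 2 + k * ⟪h, v⟫ := by
  have hexpand : ‖G (m + k • v)‖ ^ 2 = ‖G m‖ ^ 2 + 2 * k * ⟪G m, G v⟫ + k ^ 2 * ‖G v‖ ^ 2 := by
    rw [map_add, map_smul, norm_add_sq_real, real_inner_smul_right, norm_smul, mul_pow,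
      Real.norm_eq_abs, sq_abs]
    ring
  linear_combination (1 / 2) * hexpand + k * hv

theorem energy_step_le {α k : ℝ} (hα : 0 < α) (hk : 0 ≤ k) {m m' v h : H}
    (hm : m' = m + k • v) {K : Submodule ℝ H} {S : H →ₗ[ℝ] H} (hvK : v ∈ K)
    (hS : ∀ x, ⟪S x, x⟫ = 0)
    (hscheme : ∀ φ ∈ K,
      α * ⟪v, φ⟫ + ⟪S v, φ⟫ + (k / 2) * ⟪G v, G φ⟫ = -⟪G m, G φ⟫ + ⟪h, φ⟫) :
    (1 / 2) * ‖G m'‖ ^ 2 + (α * k / 2) * ‖v‖ ^ 2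
      ≤ (1 / 2) * ‖G m‖ ^ 2 + k / (2 * α) * ‖h‖ ^ 2 := by
  have htested := hscheme v hvK
  rw [hS, real_inner_self_eq_norm_sq, real_inner_self_eq_norm_sq, add_zero] at htested
  have henergy := half_norm_sq_map_add_smul_eq G htested
  have hyoung := mul_le_mul_of_nonneg_left (real_inner_le_norm_sq_div_add hα h v) hk
  rw [hm]
  linear_combination henergy + hyoung

end Scheme

theorem add_sum_Icc_le_of_step_le {E d f : ℕ → ℝ} {n : ℕ}
    (hstep : ∀ i ∈ Icc 1 n, E (i + 1) + d i ≤ E i + f i) :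
    E (n + 1) + ∑ i ∈ Icc 1 n, d i ≤ E 1 + ∑ i ∈ Icc 1 n, f i := by
  induction n with
  | zero => simp
  | succ n ih =>
    rw [sum_Icc_succ_top (by omega), sum_Icc_succ_top (by omega)]
    have hprev := ih fun i hi => hstep i (by simp only [mem_Icc] at hi ⊢; omega)
    have hlast := hstep (n + 1) (by simp)
    linarith

theorem sum_Icc_one_eq_sum_range {M : Type*} [AddCommMonoid M] (f : ℕ → M) (n : ℕ) :
    ∑ i ∈ Icc 1 n, f i = ∑ i ∈ range n, f (i + 1) := by
  rw [← Ico_add_one_right_eq_Icc, sum_Ico_eq_sum_range]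
  simp [add_comm]

theorem sum_Icc_add_shift_le {f : ℕ → ℝ} {n : ℕ} (hf : ∀ i ≤ n, 0 ≤ f i) {p q c : ℝ}
    (hp : 0 ≤ p) (hq : 0 ≤ q) (hc : 0 ≤ c) :
    ∑ i ∈ Icc 1 n, (p * f i + q * f (i - 1) + c) ≤ ∑ i ∈ range (n + 1), ((p + q) * f i + c) := by
  have hshift : ∑ i ∈ range n, f (i + 1) ≤ ∑ i ∈ range (n + 1), f i := by
    rw [sum_range_succ']
    linarith [hf 0 n.zero_le]
  have htrunc : ∑ i ∈ range n, f i ≤ ∑ i ∈ range (n + 1), f i := by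
    rw [sum_range_succ]
    linarith [hf n le_rfl]
  rw [sum_Icc_one_eq_sum_range]
  calc ∑ i ∈ range n, (p * f (i + 1) + q * f (i + 1 - 1) + c)
      = p * ∑ i ∈ range n, f (i + 1) + q * ∑ i ∈ range n, f i + n * c := by
        simp [sum_add_distrib, mul_sum]
    _ ≤ p * ∑ i ∈ range (n + 1), f i + q * ∑ i ∈ range (n + 1), f i + (n + 1) * c := by
        gcongr
        linarith
    _ = ∑ i ∈ range (n + 1), ((p + q) * f i + c) := by
        simp [sum_add_distrib, mul_sum, add_mul]

theorem stmt_2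
    {H H' : Type*}
    [NormedAddCommGroup H] [InnerProductSpace ℝ H]
    [NormedAddCommGroup H'] [InnerProductSpace ℝ H']
    (G : H →ₗ[ℝ] H')
    (α k M c : ℝ) (hα : 0 < α) (hk : 0 < k) (hM : 0 ≤ M) (hc : 0 ≤ c)
    (j : ℕ) (hj : 2 ≤ j)
    (m v h : ℕ → H) (b : ℕ → ℝ)
    (hb : ∀ i < j, 0 ≤ b i)
    (hupdate : ∀ i, 1 ≤ i → i ≤ j - 1 → m (i + 1) = m i + k • v (i + 1))
    (hscheme : ∀ i, 1 ≤ i → i ≤ j - 1 →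
      ∃ (K : Submodule ℝ H) (S : H →ₗ[ℝ] H),
        v (i + 1) ∈ K ∧ (∀ x : H, ⟪S x, x⟫ = 0) ∧
        ∀ φ ∈ K,
          α * ⟪v (i + 1), φ⟫ + ⟪S (v (i + 1)), φ⟫
              + (k / 2) * ⟪G (v (i + 1)), G φ⟫
            = -⟪G (m i), G φ⟫ + ⟪h i, φ⟫)
    (hforce : ∀ i, 1 ≤ i → i ≤ j - 1 →
      ‖h i‖ ^ 2 ≤ M * ((9 / 2) * b i + (1 / 4) * b (i - 1) + c)) :
    (1 / 2) * ‖G (m j)‖ ^ 2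
        + (α * k / 2) * ∑ i ∈ Finset.Icc 1 (j - 1), ‖v (i + 1)‖ ^ 2
      ≤ (1 / 2) * ‖G (m 1)‖ ^ 2
        + (M * k / (2 * α)) * ∑ i ∈ Finset.range j, (5 * b i + c) := by
  obtain ⟨n, rfl⟩ : ∃ n, j = n + 1 := ⟨j - 1, by omega⟩
  simp only [Nat.add_sub_cancel] at hupdate hscheme hforce ⊢
  have hstep : ∀ i ∈ Icc 1 n,
      (1 / 2) * ‖G (m (i + 1))‖ ^ 2 + (α * k / 2) * ‖v (i + 1)‖ ^ 2
        ≤ (1 / 2) * ‖G (m i)‖ ^ 2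
          + M * k / (2 * α) * ((9 / 2) * b i + (1 / 4) * b (i - 1) + c) := by
    intro i hi
    obtain ⟨hi1, hin⟩ := mem_Icc.mp hi
    obtain ⟨K, S, hvK, hS, hK⟩ := hscheme i hi1 hin
    calc _ ≤ (1 / 2) * ‖G (m i)‖ ^ 2 + k / (2 * α) * ‖h i‖ ^ 2 :=
          energy_step_le G hα hk.le (hupdate i hi1 hin) hvK hS hK
      _ ≤ (1 / 2) * ‖G (m i)‖ ^ 2
            + k / (2 * α) * (M * ((9 / 2) * b i + (1 / 4) * b (i - 1) + c)) := by
          gcongr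
          exact hforce i hi1 hin
      _ = _ := by ring
  have hsum : ∑ i ∈ Icc 1 n, ((9 / 2) * b i + (1 / 4) * b (i - 1) + c)
      ≤ ∑ i ∈ range (n + 1), (5 * b i + c) := by
    refine (sum_Icc_add_shift_le (p := 9 / 2) (q := 1 / 4) (fun i hi => hb i (by omega))
      (by norm_num) (by norm_num) hc).trans (sum_le_sum fun i hi => ?_)
    linarith [hb i (mem_range.mp hi)]
  calc _ ≤ (1 / 2) * ‖G (m 1)‖ ^ 2
        + ∑ i ∈ Icc 1 n, M * k / (2 * α) * ((9 / 2) * b i + (1 / 4) * b (i - 1) + c) := by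
        rw [mul_sum]
        exact add_sum_Icc_le_of_step_le (E := fun i => (1 / 2) * ‖G (m i)‖ ^ 2)
          (d := fun i => (α * k / 2) * ‖v (i + 1)‖ ^ 2) hstep
    _ ≤ _ := by
        rw [← mul_sum]
        gcongr
end

section
/- Let H and E be real inner product spaces, ε : H → E a linear map, k > 0, β ∈ ℝ, and i ≥ 1 an integer. Let u^{i−1}, u^i, u^{i+1} ∈ H and p^{i−1}, p^i, p^{i+1} ∈ E be such that for every ψ ∈ H one has ⟪(u^{i+1} − 2u^i + u^{i−1})/k², ψ⟫ + β⟪ε u^{i+1}, ε ψ⟫ = −(1 − 2β)⟪ε u^i − p^i, ε ψ⟫ − β⟪ε u^{i−1} − p^{i−1}, ε ψ⟫ + β⟪p^{i+1}, ε ψ⟫. Then, writing ∂ₜx^i := (x^i − x^{i−1})/k, one has the energy-difference identity ‖∂ₜu^{i+1}‖² − ‖∂ₜu^i‖² + β k² ‖ε ∂ₜu^{i+1}‖² − β k² ‖ε ∂ₜu^i‖² + ⟪ε u^{i+1}, ε u^i⟫ − ⟪ε u^i, ε u^{i−1}⟫ = β k² ⟪∂ₜp^{i+1} − ∂ₜp^i,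 ε ∂ₜu^{i+1} + ε ∂ₜu^i⟫ + k ⟪p^i, ε ∂ₜu^{i+1} + ε ∂ₜu^i⟫. -/
open RealInnerProductSpace

theorem stmt_8
    {H E : Type*}
    [NormedAddCommGroup H] [InnerProductSpace ℝ H]
    [NormedAddCommGroup E] [InnerProductSpace ℝ E]
    (ε : H →ₗ[ℝ] E)
    (k β : ℝ) (hk : 0 < k)
    (i : ℕ) (hi : 1 ≤ i)
    (u : ℕ → H) (p : ℕ → E)
    (heq : ∀ ψ : H,
      ⟪(k ^ 2)⁻¹ • (u (i + 1) - (2 : ℝ) • u i + u (i - 1)), ψ⟫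
          + β * ⟪ε (u (i + 1)), ε ψ⟫
        = -(1 - 2 * β) * ⟪ε (u i) - p i, ε ψ⟫
          - β * ⟪ε (u (i - 1)) - p (i - 1), ε ψ⟫
          + β * ⟪p (i + 1), ε ψ⟫) :
    ‖k⁻¹ • (u (i + 1) - u i)‖ ^ 2 - ‖k⁻¹ • (u i - u (i - 1))‖ ^ 2
        + β * k ^ 2 * ‖ε (k⁻¹ • (u (i + 1) - u i))‖ ^ 2
        - β * k ^ 2 * ‖ε (k⁻¹ • (u i - u (i - 1)))‖ ^ 2
        + ⟪ε (u (i + 1)), ε (u i)⟫ - ⟪ε (u i), ε (u (i - 1))⟫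
      = β * k ^ 2 * ⟪k⁻¹ • (p (i + 1) - p i) - k⁻¹ • (p i - p (i - 1)),
          ε (k⁻¹ • (u (i + 1) - u i)) + ε (k⁻¹ • (u i - u (i - 1)))⟫
        + k * ⟪p i,
            ε (k⁻¹ • (u (i + 1) - u i)) + ε (k⁻¹ • (u i - u (i - 1)))⟫ := by
  have h := heq (u (i + 1) - u (i - 1))
  simp only [map_sub, map_add, map_smul, smul_sub, smul_add, inner_sub_left,
    inner_sub_right, inner_add_left, inner_add_right, real_inner_smul_left,
    real_inner_smul_right, ← real_inner_self_eq_norm_sq] at h ⊢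
  have hk0 : k ≠ 0 := ne_of_gt hk
  linear_combination (norm := (field_simp; ring)) h
    - k⁻¹ ^ 2 * real_inner_comm (u i) (u (i + 1))
    - k⁻¹ ^ 2 * real_inner_comm (u (i - 1)) (u i)
    + k⁻¹ ^ 2 * real_inner_comm (u (i - 1)) (u (i + 1))
    - (β - 1) * real_inner_comm (ε (u i)) (ε (u (i + 1)))
    - β * real_inner_comm (ε (u (i - 1))) (ε (u i))
    - β * real_inner_comm (ε (u (i + 1))) (ε (u (i - 1)))
end

section
/- Let H and E be real inner product spaces, ε : H → E a linear map, k > 0, β ∈ ℝ, and j ≥ 2 an integer. Let u⁰, …, u^j ∈ H and p⁰, …, p^j ∈ E be such that for each i = 1, …, j−1 and every ψ ∈ H one has ⟪(u^{i+1} − 2u^i + u^{i−1})/k², ψ⟫ + β⟪ε u^{i+1}, ε ψ⟫ = −(1 − 2β)⟪ε u^i − p^i, ε ψ⟫ − β⟪ε u^{i−1} − p^{i−1}, ε ψ⟫ + β⟪p^{i+1}, ε ψ⟫. Then, writing ∂ₜx^i := (x^i − x^{i−1})/k, one has the summed identity ‖∂ₜu^j‖² − ‖∂ₜu¹‖² +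 β k² ‖ε ∂ₜu^j‖² − β k² ‖ε ∂ₜu¹‖² + ⟪ε u^j, ε u^{j−1}⟫ − ⟪ε u¹, ε u⁰⟫ = β k² ⟪∂ₜp^j, ε ∂ₜu^j⟫ − β k² ⟪∂ₜp¹, ε ∂ₜu¹⟫ + β k² Σ_{i=1}^{j−1} ⟪∂ₜp^{i+1}, ε ∂ₜu^i⟫ − β k² Σ_{i=1}^{j−1} ⟪∂ₜp^i, ε ∂ₜu^{i+1}⟫ + k Σ_{i=1}^{j−1} ⟪p^i, ε ∂ₜu^{i+1} + ε ∂ₜu^i⟫. -/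
/-!
Testing the scheme at step `i` with `ψ = u^{i+1} - u^{i-1} = k (∂ₜu^{i+1} + ∂ₜu^i)` turns the
discrete acceleration term into `‖∂ₜu^{i+1}‖² - ‖∂ₜu^i‖²` and the elastic terms into the increment
of `β k² ‖ε ∂ₜu‖² + ⟪ε u^{i+1}, ε u^i⟫`; the magnetostrictive terms are regrouped into the
increment of `β k² ⟪∂ₜp, ε ∂ₜu⟫` plus a remainder. Summing over `i` telescopes.
-/

open RealInnerProductSpace Finset

theorem sub_eq_sub_add_sum_Icc_of_sub_eq {M : Type*} [AddCommGroup M] {D P S : ℕ → M} {j : ℕ}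
    (hj : 1 ≤ j) (h : ∀ i ∈ Icc 1 (j - 1), D (i + 1) - D i = P (i + 1) - P i + S i) :
    D j - D 1 = P j - P 1 + ∑ i ∈ Icc 1 (j - 1), S i := by
  rw [Icc_sub_one_right_eq_Ico_of_not_isMin (by simpa using Nat.one_le_iff_ne_zero.mp hj)] at *
  rw [← sum_Ico_sub (f := D) hj, ← sum_Ico_sub (f := P) hj, ← sum_add_distrib]
  exact sum_congr rfl h

theorem newmark_energy_step {H E : Type*} [NormedAddCommGroup H] [InnerProductSpace ℝ H]
    [NormedAddCommGroup E] [InnerProductSpace ℝ E] (ε : H →ₗ[ℝ] E) {k : ℝ} (hk : k ≠ 0) (β : ℝ)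
    (a b c : H) (q₀ q₁ q₂ : E)
    (h : ⟪(k ^ 2)⁻¹ • (c - (2 : ℝ) • b + a), c - a⟫ + β * ⟪ε c, ε (c - a)⟫
        = -(1 - 2 * β) * ⟪ε b - q₁, ε (c - a)⟫ - β * ⟪ε a - q₀, ε (c - a)⟫
          + β * ⟪q₂, ε (c - a)⟫) :
    (‖k⁻¹ • (c - b)‖ ^ 2 + β * k ^ 2 * ‖ε (k⁻¹ • (c - b))‖ ^ 2 + ⟪ε c, ε b⟫)
      - (‖k⁻¹ • (b - a)‖ ^ 2 + β * k ^ 2 * ‖ε (k⁻¹ • (b - a))‖ ^ 2 + ⟪ε b, ε a⟫)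
    = β * k ^ 2 * ⟪k⁻¹ • (q₂ - q₁), ε (k⁻¹ • (c - b))⟫
      - β * k ^ 2 * ⟪k⁻¹ • (q₁ - q₀), ε (k⁻¹ • (b - a))⟫
      + (β * k ^ 2 * ⟪k⁻¹ • (q₂ - q₁), ε (k⁻¹ • (b - a))⟫
        - β * k ^ 2 * ⟪k⁻¹ • (q₁ - q₀), ε (k⁻¹ • (c - b))⟫
        + k * ⟪q₁, ε (k⁻¹ • (c - b)) + ε (k⁻¹ • (b - a))⟫) := by
  simp only [← real_inner_self_eq_norm_sq, map_sub, map_smul, smul_sub, real_inner_smul_left,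
    real_inner_smul_right, inner_sub_left, inner_sub_right, inner_add_left,
    inner_add_right] at h ⊢
  simp only [real_inner_comm (ε c), real_inner_comm c, real_inner_comm b a,
    real_inner_comm (ε b) (ε a)] at h ⊢
  field_simp at h ⊢
  linear_combination h

theorem stmt_9
    {H E : Type*}
    [NormedAddCommGroup H] [InnerProductSpace ℝ H]
    [NormedAddCommGroup E] [InnerProductSpace ℝ E]
    (ε : H →ₗ[ℝ] E)
    (k β : ℝ) (hk : 0 < k)
    (j : ℕ) (hj : 2 ≤ j)
    (u : ℕ → H) (p : ℕ → E)
    (heq : ∀ i, 1 ≤ i → i ≤ j - 1 → ∀ ψ : H,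
      ⟪(k ^ 2)⁻¹ • (u (i + 1) - (2 : ℝ) • u i + u (i - 1)), ψ⟫
          + β * ⟪ε (u (i + 1)), ε ψ⟫
        = -(1 - 2 * β) * ⟪ε (u i) - p i, ε ψ⟫
          - β * ⟪ε (u (i - 1)) - p (i - 1), ε ψ⟫
          + β * ⟪p (i + 1), ε ψ⟫) :
    ‖k⁻¹ • (u j - u (j - 1))‖ ^ 2 - ‖k⁻¹ • (u 1 - u 0)‖ ^ 2
        + β * k ^ 2 * ‖ε (k⁻¹ • (u j - u (j - 1)))‖ ^ 2
        - β * k ^ 2 * ‖ε (k⁻¹ • (u 1 - u 0))‖ ^ 2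
        + ⟪ε (u j), ε (u (j - 1))⟫ - ⟪ε (u 1), ε (u 0)⟫
      = β * k ^ 2 * ⟪k⁻¹ • (p j - p (j - 1)), ε (k⁻¹ • (u j - u (j - 1)))⟫
        - β * k ^ 2 * ⟪k⁻¹ • (p 1 - p 0), ε (k⁻¹ • (u 1 - u 0))⟫
        + β * k ^ 2 * ∑ i ∈ Finset.Icc 1 (j - 1),
            ⟪k⁻¹ • (p (i + 1) - p i), ε (k⁻¹ • (u i - u (i - 1)))⟫
        - β * k ^ 2 * ∑ i ∈ Finset.Icc 1 (j - 1),
            ⟪k⁻¹ • (p i - p (i - 1)), ε (k⁻¹ • (u (i + 1) - u i))⟫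
        + k * ∑ i ∈ Finset.Icc 1 (j - 1),
            ⟪p i, ε (k⁻¹ • (u (i + 1) - u i)) + ε (k⁻¹ • (u i - u (i - 1)))⟫ := by
  have htelescoped := sub_eq_sub_add_sum_Icc_of_sub_eq (j := j) (by omega)
    (D := fun n ↦ ‖k⁻¹ • (u n - u (n - 1))‖ ^ 2
      + β * k ^ 2 * ‖ε (k⁻¹ • (u n - u (n - 1)))‖ ^ 2 + ⟪ε (u n), ε (u (n - 1))⟫)
    (P := fun n ↦ β * k ^ 2 * ⟪k⁻¹ • (p n - p (n - 1)), ε (k⁻¹ • (u n - u (n - 1)))⟫)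
    (S := fun n ↦ β * k ^ 2 * ⟪k⁻¹ • (p (n + 1) - p n), ε (k⁻¹ • (u n - u (n - 1)))⟫
      - β * k ^ 2 * ⟪k⁻¹ • (p n - p (n - 1)), ε (k⁻¹ • (u (n + 1) - u n))⟫
      + k * ⟪p n, ε (k⁻¹ • (u (n + 1) - u n)) + ε (k⁻¹ • (u n - u (n - 1)))⟫)
    fun i hi ↦ by
      obtain ⟨hi₁, hi₂⟩ := mem_Icc.mp hi
      simpa only [Nat.add_sub_cancel] using newmark_energy_step ε hk.ne' β _ _ _ _ _ _
        (heq i hi₁ hi₂ (u (i + 1) - u (i - 1)))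
  simp only [Nat.sub_self, sum_add_distrib, sum_sub_distrib, ← mul_sum] at htelescoped
  linear_combination htelescoped
end

section
/- Let H and E be real inner product spaces and ε : H → E a linear map, and let β ∈ (1/4, 1]. Then there exist constants k₀ > 0 and C > 0, depending only on β, with the following property. Let 0 < k < k₀, let j ≥ 2 be an integer, let u⁰, …, u^j ∈ H and p⁰, …, p^j ∈ E satisfy, for each i = 1, …, j−1 and every ψ ∈ H, ⟪(u^{i+1} − 2u^i + u^{i−1})/k², ψ⟫ + β⟪ε u^{i+1}, ε ψ⟫ = −(1 − 2β)⟪ε u^i − p^i, ε ψ⟫ − β⟪ε u^{i−1} − p^{i−1}, ε ψ⟫ + β⟪p^{i+1}, ε ψ⟫, and assume ‖p^i‖ ≤ P for all 0 ≤ i ≤ j and k Σ_{i=0}^{j−1} ‖(p^{i+1} − p^i)/k‖² ≤ R for some P, R ≥ 0. Then, writing ∂ₜx^i := (x^i − x^{i−1})/k, one has ‖∂ₜu^j‖² + k²‖ε ∂ₜu^j‖² + ‖ε u^j‖² ≤ C (‖∂ₜu¹‖² + k²‖ε ∂ₜu¹‖² + ‖ε u¹‖² + ‖ε u⁰‖²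 + P² + R + k Σ_{i=1}^{j−1} ‖ε u^i‖²). -/
/-!
Write `a m = ε (u m)`, `v m = k⁻¹ • (u (m + 1) - u m)` and
`q m = (1 - 2β) p m + β p (m + 1) + β p (m - 1)`. Testing step `i` of the scheme with
`ψ = u (i + 1) - u (i - 1)` gives the discrete energy identity
`𝓔 i - 𝓔 (i - 1) = ⟪q i, a (i + 1) - a (i - 1)⟫` for
`𝓔 m = ‖v m‖² + (β - 1/4) ‖a (m + 1) - a m‖² + ‖a (m + 1) + a m‖² / 4`,
the usual energy `‖v m‖² + β ‖a (m + 1) - a m‖² + ⟪a m, a (m + 1)⟫` rewritten by polarization so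
that its coercivity for `β > 1/4` is visible. Summing by parts moves the time difference onto `q`.
The boundary term at the last step is absorbed into the energy by Young's inequality and
`‖p i‖ ≤ P`; Young's inequality with weight `k` splits the remaining sum into
`k⁻¹ ‖q m - q (m + 1)‖²`, which is controlled by `R`, and `k ‖a (m + 1) + a m‖²`.
-/

open RealInnerProductSpace Finset

section Normed

variable {G : Type*} [SeminormedAddCommGroup G]

theorem sum_range_norm_sub_pred_sq_le (p : ℕ → G) (n : ℕ) :
    ∑ m ∈ range n, ‖p (m - 1) - p m‖ ^ 2 ≤ ∑ i ∈ range n, ‖p (i + 1) - p i‖ ^ 2 :=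
  calc ∑ m ∈ range n, ‖p (m - 1) - p m‖ ^ 2
      ≤ ∑ m ∈ range (n + 1), ‖p (m - 1) - p m‖ ^ 2 :=
        sum_le_sum_of_subset_of_nonneg (range_subset_range.mpr n.le_succ) fun _ _ _ => by positivity
    _ = ∑ i ∈ range n, ‖p (i + 1) - p i‖ ^ 2 := by
        rw [sum_range_succ']
        simp only [Nat.add_sub_cancel, Nat.zero_sub, sub_self, norm_zero]
        rw [zero_pow two_ne_zero, add_zero]
        exact sum_congr rfl fun i _ => by rw [norm_sub_rev]

variable [NormedSpace ℝ G]

theorem sq_mul_norm_inv_smul {k : ℝ} (hk : k ≠ 0) (x : G) : k ^ 2 * ‖k⁻¹ • x‖ ^ 2 = ‖x‖ ^ 2 := by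
  rw [norm_smul, mul_pow, norm_inv, Real.norm_eq_abs, inv_pow, sq_abs]
  field_simp

theorem norm_smul_add_smul_add_smul_le {a b c : ℝ} (ha : |a| ≤ 1) (hb : |b| ≤ 1) (hc : |c| ≤ 1)
    (x y z : G) : ‖a • x + b • y + c • z‖ ≤ ‖x‖ + ‖y‖ + ‖z‖ := by
  have hsmul : ∀ {r : ℝ}, |r| ≤ 1 → ∀ w : G, ‖r • w‖ ≤ ‖w‖ := fun hr w => by
    rw [norm_smul, Real.norm_eq_abs]; exact mul_le_of_le_one_left (norm_nonneg w) hr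
  calc ‖a • x + b • y + c • z‖ ≤ ‖a • x‖ + ‖b • y‖ + ‖c • z‖ := norm_add₃_le
    _ ≤ ‖x‖ + ‖y‖ + ‖z‖ := by gcongr <;> apply hsmul <;> assumption

end Normed

section InnerProduct

variable {F : Type*} [NormedAddCommGroup F] [InnerProductSpace ℝ F]

theorem two_mul_mul_real_inner_le (t : ℝ) (x y : F) :
    2 * t * ⟪x, y⟫ ≤ ‖x‖ ^ 2 + t ^ 2 * ‖y‖ ^ 2 := by
  have h := norm_sub_sq_real x (t • y)
  rw [real_inner_smul_right, norm_smul, mul_pow, Real.norm_eq_abs, sq_abs] at h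
  nlinarith [sq_nonneg ‖x - t • y‖]

theorem sum_inner_succ_sub_eq (q a : ℕ → F) (n : ℕ) :
    ∑ m ∈ range n, ⟪q (m + 1), a (m + 2) - a m⟫
      = ⟪q n, a (n + 1) + a n⟫ - ⟪q 0, a 1 + a 0⟫
        + ∑ m ∈ range n, ⟪q m - q (m + 1), a (m + 1) + a m⟫ := by
  rw [← sum_range_sub (fun m => ⟪q m, a (m + 1) + a m⟫), ← sum_add_distrib]
  refine sum_congr rfl fun m _ => ?_
  simp only [inner_sub_left, inner_sub_right, inner_add_right]
  ring

theorem sum_range_norm_add_sq_le (a : ℕ → F) (n : ℕ) :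
    ∑ m ∈ range n, ‖a (m + 1) + a m‖ ^ 2 ≤ 2 * ‖a 0‖ ^ 2 + 4 * ∑ i ∈ Icc 1 n, ‖a i‖ ^ 2 := by
  have hshift : ∑ m ∈ range n, ‖a (m + 1)‖ ^ 2 = ∑ i ∈ Icc 1 n, ‖a i‖ ^ 2 := by
    rw [range_eq_Ico, sum_Ico_add' (fun i => ‖a i‖ ^ 2), Ico_add_one_right_eq_Icc]
  have hpred : ∑ m ∈ range n, ‖a m‖ ^ 2 ≤ ‖a 0‖ ^ 2 + ∑ i ∈ Icc 1 n, ‖a i‖ ^ 2 := by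
    have := sum_range_succ' (fun m => ‖a m‖ ^ 2) n
    rw [sum_range_succ, hshift] at this
    linarith [sq_nonneg ‖a n‖]
  calc ∑ m ∈ range n, ‖a (m + 1) + a m‖ ^ 2
      ≤ ∑ m ∈ range n, 2 * (‖a (m + 1)‖ ^ 2 + ‖a m‖ ^ 2) := by
        refine sum_le_sum fun m _ => ?_
        linarith [parallelogram_law_with_norm ℝ (a (m + 1)) (a m), sq_nonneg ‖a (m + 1) - a m‖]
    _ ≤ 2 * ‖a 0‖ ^ 2 + 4 * ∑ i ∈ Icc 1 n, ‖a i‖ ^ 2 := by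
        rw [← mul_sum, sum_add_distrib, hshift]
        linarith

end InnerProduct

section Newmark

variable {H E : Type*} [NormedAddCommGroup H] [InnerProductSpace ℝ H]
  [NormedAddCommGroup E] [InnerProductSpace ℝ E] (ε : H →ₗ[ℝ] E) (β k : ℝ) (u : ℕ → H) (p : ℕ → E)

def IsNewmarkStep (i : ℕ) : Prop :=
  ∀ ψ : H, ⟪(k ^ 2)⁻¹ • (u (i + 1) - (2 : ℝ) • u i + u (i - 1)), ψ⟫
      + β * ⟪ε (u (i + 1)), ε ψ⟫
    = -(1 - 2 * β) * ⟪ε (u i) - p i, ε ψ⟫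
      - β * ⟪ε (u (i - 1)) - p (i - 1), ε ψ⟫
      + β * ⟪p (i + 1), ε ψ⟫

noncomputable def newmarkLoad (m : ℕ) : E := (1 - 2 * β) • p m + β • p (m + 1) + β • p (m - 1)

noncomputable def newmarkEnergy (m : ℕ) : ℝ :=
  ‖k⁻¹ • (u (m + 1) - u m)‖ ^ 2 + (β - 1 / 4) * ‖ε (u (m + 1)) - ε (u m)‖ ^ 2
    + ‖ε (u (m + 1)) + ε (u m)‖ ^ 2 / 4

variable {ε β k u p}

theorem newmarkEnergy_succ_sub (hk : k ≠ 0) {m : ℕ} (h : IsNewmarkStep ε β k u p (m + 1)) :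
    newmarkEnergy ε β k u (m + 1) - newmarkEnergy ε β k u m
      = ⟪newmarkLoad β p (m + 1), ε (u (m + 2)) - ε (u m)⟫ := by
  have h := h (u (m + 2) - u m)
  simp only [newmarkEnergy, newmarkLoad, Nat.add_sub_cancel, show m + 1 + 1 = m + 2 from rfl,
    map_sub, inner_sub_left, inner_sub_right, inner_add_left, inner_add_right,
    real_inner_smul_left, real_inner_smul_right, ← real_inner_self_eq_norm_sq,
    real_inner_comm] at h ⊢
  field_simp at h ⊢
  linear_combination 4 * h

theorem newmarkEnergy_eq_add_sum (hk : k ≠ 0) {n : ℕ}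
    (hstep : ∀ i, 1 ≤ i → i ≤ n → IsNewmarkStep ε β k u p i) :
    newmarkEnergy ε β k u n = newmarkEnergy ε β k u 0
      + ⟪newmarkLoad β p n, ε (u (n + 1)) + ε (u n)⟫ - ⟪newmarkLoad β p 0, ε (u 1) + ε (u 0)⟫
      + ∑ m ∈ range n, ⟪newmarkLoad β p m - newmarkLoad β p (m + 1), ε (u (m + 1)) + ε (u m)⟫ := by
  have htelescope : newmarkEnergy ε β k u n - newmarkEnergy ε β k u 0
      = ∑ m ∈ range n, ⟪newmarkLoad β p (m + 1), ε (u (m + 2)) - ε (u m)⟫ := by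
    rw [← sum_range_sub]
    refine sum_congr rfl fun m hm => newmarkEnergy_succ_sub hk (hstep _ le_add_self ?_)
    exact mem_range.mp hm
  linarith [sum_inner_succ_sub_eq (newmarkLoad β p) (fun m => ε (u m)) n]

theorem le_newmarkEnergy (m : ℕ) :
    ‖k⁻¹ • (u (m + 1) - u m)‖ ^ 2 + min (β - 1 / 4) (1 / 4)
        * (‖ε (u (m + 1)) - ε (u m)‖ ^ 2 + ‖ε (u (m + 1)) + ε (u m)‖ ^ 2)
      ≤ newmarkEnergy ε β k u m := by
  have h₁ := mul_le_mul_of_nonneg_right (min_le_left (β - 1 / 4) (1 / 4))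
    (sq_nonneg ‖ε (u (m + 1)) - ε (u m)‖)
  have h₂ := mul_le_mul_of_nonneg_right (min_le_right (β - 1 / 4) (1 / 4))
    (sq_nonneg ‖ε (u (m + 1)) + ε (u m)‖)
  unfold newmarkEnergy
  linarith

theorem norm_newmarkLoad_sq_le (hβ₀ : 0 ≤ β) (hβ₁ : β ≤ 1) {P : ℝ} {m : ℕ}
    (hp : ∀ i ≤ m + 1, ‖p i‖ ≤ P) : ‖newmarkLoad β p m‖ ^ 2 ≤ 9 * P ^ 2 := by
  have h := norm_smul_add_smul_add_smul_le (a := 1 - 2 * β) (b := β) (c := β)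
    (abs_le.mpr ⟨by linarith, by linarith⟩) (abs_le.mpr ⟨by linarith, hβ₁⟩)
    (abs_le.mpr ⟨by linarith, hβ₁⟩) (p m) (p (m + 1)) (p (m - 1))
  have h3P : ‖newmarkLoad β p m‖ ≤ 3 * P :=
    h.trans (by linarith [hp m (by omega), hp (m + 1) le_rfl, hp (m - 1) (by omega)])
  nlinarith [norm_nonneg (newmarkLoad β p m)]

theorem norm_newmarkLoad_sub_sq_le (hβ₀ : 0 ≤ β) (hβ₁ : β ≤ 1) (m : ℕ) :
    ‖newmarkLoad β p m - newmarkLoad β p (m + 1)‖ ^ 2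
      ≤ 3 * (‖p (m + 1) - p m‖ ^ 2 + ‖p (m + 2) - p (m + 1)‖ ^ 2 + ‖p (m - 1) - p m‖ ^ 2) := by
  have hsplit : newmarkLoad β p m - newmarkLoad β p (m + 1)
      = (2 * β - 1) • (p (m + 1) - p m) + (-β) • (p (m + 2) - p (m + 1))
        + β • (p (m - 1) - p m) := by
    simp only [newmarkLoad, Nat.add_sub_cancel]
    module
  have h := norm_smul_add_smul_add_smul_le (a := 2 * β - 1) (b := -β) (c := β)
    (abs_le.mpr ⟨by linarith, by linarith⟩) (by rw [abs_neg]; exact abs_le.mpr ⟨by linarith, hβ₁⟩)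
    (abs_le.mpr ⟨by linarith, hβ₁⟩) (p (m + 1) - p m) (p (m + 2) - p (m + 1)) (p (m - 1) - p m)
  rw [← hsplit] at h
  have h₀ := norm_nonneg (newmarkLoad β p m - newmarkLoad β p (m + 1))
  nlinarith [sq_nonneg (‖p (m + 1) - p m‖ - ‖p (m + 2) - p (m + 1)‖),
    sq_nonneg (‖p (m + 1) - p m‖ - ‖p (m - 1) - p m‖),
    sq_nonneg (‖p (m + 2) - p (m + 1)‖ - ‖p (m - 1) - p m‖)]

theorem sum_norm_newmarkLoad_sub_sq_le (hβ₀ : 0 ≤ β) (hβ₁ : β ≤ 1) (n : ℕ) :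
    ∑ m ∈ range n, ‖newmarkLoad β p m - newmarkLoad β p (m + 1)‖ ^ 2
      ≤ 9 * ∑ i ∈ range (n + 1), ‖p (i + 1) - p i‖ ^ 2 := by
  have hsucc : ∑ m ∈ range n, ‖p (m + 1 + 1) - p (m + 1)‖ ^ 2
      ≤ ∑ i ∈ range (n + 1), ‖p (i + 1) - p i‖ ^ 2 := by
    rw [sum_range_succ' _ n]
    exact le_add_of_nonneg_right (by positivity)
  have hself : ∑ m ∈ range n, ‖p (m + 1) - p m‖ ^ 2
      ≤ ∑ i ∈ range (n + 1), ‖p (i + 1) - p i‖ ^ 2 :=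
    sum_le_sum_of_subset_of_nonneg (range_subset_range.mpr n.le_succ) fun _ _ _ => by positivity
  calc ∑ m ∈ range n, ‖newmarkLoad β p m - newmarkLoad β p (m + 1)‖ ^ 2
      ≤ ∑ m ∈ range n,
          3 * (‖p (m + 1) - p m‖ ^ 2 + ‖p (m + 2) - p (m + 1)‖ ^ 2 + ‖p (m - 1) - p m‖ ^ 2) :=
        sum_le_sum fun m _ => norm_newmarkLoad_sub_sq_le hβ₀ hβ₁ m
    _ ≤ 9 * ∑ i ∈ range (n + 1), ‖p (i + 1) - p i‖ ^ 2 := by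
        simp only [← mul_sum, sum_add_distrib]
        linarith [sum_range_norm_sub_pred_sq_le p n]

theorem sum_inner_newmarkLoad_sub_le (hk : 0 < k) (hβ₀ : 0 ≤ β) (hβ₁ : β ≤ 1) (a : ℕ → E)
    (n : ℕ) :
    2 * ∑ m ∈ range n, ⟪newmarkLoad β p m - newmarkLoad β p (m + 1), a (m + 1) + a m⟫
      ≤ 9 * (k * ∑ i ∈ range (n + 1), ‖k⁻¹ • (p (i + 1) - p i)‖ ^ 2)
        + k * ∑ m ∈ range n, ‖a (m + 1) + a m‖ ^ 2 := by
  have hscale : ∑ i ∈ range (n + 1), ‖p (i + 1) - p i‖ ^ 2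
      = k ^ 2 * ∑ i ∈ range (n + 1), ‖k⁻¹ • (p (i + 1) - p i)‖ ^ 2 := by
    rw [mul_sum]
    exact sum_congr rfl fun i _ => (sq_mul_norm_inv_smul hk.ne' _).symm
  refine le_of_mul_le_mul_left ?_ hk
  calc k * (2 * ∑ m ∈ range n, ⟪newmarkLoad β p m - newmarkLoad β p (m + 1), a (m + 1) + a m⟫)
      ≤ ∑ m ∈ range n, (‖newmarkLoad β p m - newmarkLoad β p (m + 1)‖ ^ 2
          + k ^ 2 * ‖a (m + 1) + a m‖ ^ 2) := by
        rw [mul_sum, mul_sum]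
        refine sum_le_sum fun m _ => ?_
        linarith [two_mul_mul_real_inner_le k (newmarkLoad β p m - newmarkLoad β p (m + 1))
          (a (m + 1) + a m)]
    _ ≤ 9 * ∑ i ∈ range (n + 1), ‖p (i + 1) - p i‖ ^ 2
          + k ^ 2 * ∑ m ∈ range n, ‖a (m + 1) + a m‖ ^ 2 := by
        rw [sum_add_distrib, ← mul_sum]
        gcongr
        exact sum_norm_newmarkLoad_sub_sq_le hβ₀ hβ₁ n
    _ = k * (9 * (k * ∑ i ∈ range (n + 1), ‖k⁻¹ • (p (i + 1) - p i)‖ ^ 2)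
          + k * ∑ m ∈ range n, ‖a (m + 1) + a m‖ ^ 2) := by
        rw [hscale]; ring

theorem newmarkEnergy_le (hk : 0 < k) (hk₁ : k ≤ 1) (hβ₀ : 0 ≤ β) (hβ₁ : β ≤ 1) {n : ℕ}
    (hstep : ∀ i, 1 ≤ i → i ≤ n → IsNewmarkStep ε β k u p i) {P R : ℝ}
    (hp : ∀ i ≤ 1, ‖p i‖ ≤ P)
    (hR : k * ∑ i ∈ range (n + 1), ‖k⁻¹ • (p (i + 1) - p i)‖ ^ 2 ≤ R) :
    newmarkEnergy ε β k u n ≤ ⟪newmarkLoad β p n, ε (u (n + 1)) + ε (u n)⟫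
      + 5 * (‖k⁻¹ • (u 1 - u 0)‖ ^ 2 + ‖ε (u 1) - ε (u 0)‖ ^ 2 + ‖ε (u 1)‖ ^ 2
        + ‖ε (u 0)‖ ^ 2 + P ^ 2 + R + k * ∑ i ∈ Icc 1 n, ‖ε (u i)‖ ^ 2) := by
  have hT0 : -2 * ⟪newmarkLoad β p 0, ε (u 1) + ε (u 0)⟫
      ≤ 9 * P ^ 2 + ‖ε (u 1) + ε (u 0)‖ ^ 2 := by
    have h := two_mul_mul_real_inner_le 1 (-newmarkLoad β p 0) (ε (u 1) + ε (u 0))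
    rw [inner_neg_left, norm_neg] at h
    linarith [norm_newmarkLoad_sq_le (m := 0) hβ₀ hβ₁ hp]
  have hsum := sum_inner_newmarkLoad_sub_le hk hβ₀ hβ₁ (p := p) (fun m => ε (u m)) n
  have hsum' := sum_range_norm_add_sq_le (fun m => ε (u m)) n
  beta_reduce at hsum hsum'
  have hE0 : newmarkEnergy ε β k u 0 ≤ ‖k⁻¹ • (u 1 - u 0)‖ ^ 2 + ‖ε (u 1) - ε (u 0)‖ ^ 2
      + ‖ε (u 1) + ε (u 0)‖ ^ 2 / 4 := by
    have := mul_le_of_le_one_left (sq_nonneg ‖ε (u 1) - ε (u 0)‖) (by linarith : β - 1 / 4 ≤ 1)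
    unfold newmarkEnergy
    linarith
  have hk0 : k * ‖ε (u 0)‖ ^ 2 ≤ ‖ε (u 0)‖ ^ 2 := mul_le_of_le_one_left (sq_nonneg _) hk₁
  have hA : 0 ≤ k * ∑ i ∈ Icc 1 n, ‖ε (u i)‖ ^ 2 := by positivity
  have hR₀ : 0 ≤ R := le_trans (by positivity) hR
  linarith [newmarkEnergy_eq_add_sum hk.ne' hstep, mul_le_mul_of_nonneg_left hsum' hk.le,
    parallelogram_law_with_norm ℝ (ε (u 1)) (ε (u 0)), sq_nonneg ‖k⁻¹ • (u 1 - u 0)‖,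
    sq_nonneg ‖ε (u 1) - ε (u 0)‖, sq_nonneg ‖ε (u 1)‖, sq_nonneg ‖ε (u 0)‖, sq_nonneg P]

theorem newmark_stability (hk : 0 < k) (hk₁ : k ≤ 1) (hβ : 1 / 4 < β) (hβ' : β ≤ 1) {n : ℕ}
    (hstep : ∀ i, 1 ≤ i → i ≤ n → IsNewmarkStep ε β k u p i) {P R : ℝ}
    (hp : ∀ i ≤ n + 1, ‖p i‖ ≤ P)
    (hR : k * ∑ i ∈ range (n + 1), ‖k⁻¹ • (p (i + 1) - p i)‖ ^ 2 ≤ R) :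
    min (β - 1 / 4) (1 / 4) ^ 2 * (‖k⁻¹ • (u (n + 1) - u n)‖ ^ 2
        + ‖ε (u (n + 1)) - ε (u n)‖ ^ 2 + ‖ε (u (n + 1))‖ ^ 2)
      ≤ 12 * (‖k⁻¹ • (u 1 - u 0)‖ ^ 2 + ‖ε (u 1) - ε (u 0)‖ ^ 2 + ‖ε (u 1)‖ ^ 2
        + ‖ε (u 0)‖ ^ 2 + P ^ 2 + R + k * ∑ i ∈ Icc 1 n, ‖ε (u i)‖ ^ 2) := by
  have hβ₀ : 0 ≤ β := by linarith
  have hE := (le_newmarkEnergy (ε := ε) (k := k) (u := u) n).trans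
    (newmarkEnergy_le hk hk₁ hβ₀ hβ' hstep (fun i hi => hp i (by omega)) hR)
  set c := min (β - 1 / 4) (1 / 4)
  have hc : 0 < c := lt_min (by linarith) (by norm_num)
  have hc' : c ≤ 1 / 4 := min_le_right _ _
  have hTn : 2 * c * ⟪newmarkLoad β p n, ε (u (n + 1)) + ε (u n)⟫
      ≤ 9 * P ^ 2 + c ^ 2 * ‖ε (u (n + 1)) + ε (u n)‖ ^ 2 :=
    (two_mul_mul_real_inner_le c _ _).trans (by gcongr; exact norm_newmarkLoad_sq_le hβ₀ hβ' hp)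
  have hR₀ : 0 ≤ R := le_trans (by positivity) hR
  have hA : 0 ≤ k * ∑ i ∈ Icc 1 n, ‖ε (u i)‖ ^ 2 := by positivity
  have hX : 0 ≤ ‖k⁻¹ • (u 1 - u 0)‖ ^ 2 + ‖ε (u 1) - ε (u 0)‖ ^ 2 + ‖ε (u 1)‖ ^ 2
      + ‖ε (u 0)‖ ^ 2 + P ^ 2 + R + k * ∑ i ∈ Icc 1 n, ‖ε (u i)‖ ^ 2 := by positivity
  have hc2 : c ^ 2 ≤ 2 * c := by nlinarith
  -- Multiplying by `2 * c` lets Young's inequality `hTn` absorb the boundary term into the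
  -- coercive part `c * ‖ε (u (n + 1)) + ε (u n)‖ ^ 2`.
  linarith [mul_le_mul_of_nonneg_left hE (by positivity : (0 : ℝ) ≤ 2 * c),
    mul_le_mul_of_nonneg_right hc2 (sq_nonneg ‖k⁻¹ • (u (n + 1) - u n)‖),
    mul_le_mul_of_nonneg_right hc' hX,
    congrArg (c ^ 2 * ·) (parallelogram_law_with_norm ℝ (ε (u (n + 1))) (ε (u n))),
    mul_nonneg (sq_nonneg c) (sq_nonneg ‖ε (u n)‖),
    mul_nonneg (sq_nonneg c) (sq_nonneg ‖ε (u (n + 1)) - ε (u n)‖),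
    mul_nonneg (sq_nonneg c) (sq_nonneg ‖ε (u (n + 1)) + ε (u n)‖),
    sq_nonneg ‖k⁻¹ • (u 1 - u 0)‖, sq_nonneg ‖ε (u 1) - ε (u 0)‖, sq_nonneg ‖ε (u 1)‖,
    sq_nonneg ‖ε (u 0)‖]

end Newmark

theorem stmt_15
    (β : ℝ) (hβ : 1 / 4 < β) (hβ' : β ≤ 1) :
    ∃ k₀ > (0 : ℝ), ∃ C > (0 : ℝ),
      ∀ (H E : Type) (_ : NormedAddCommGroup H) (_ : InnerProductSpace ℝ H)
        (_ : NormedAddCommGroup E) (_ : InnerProductSpace ℝ E)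
        (ε : H →ₗ[ℝ] E) (k : ℝ), 0 < k → k < k₀ →
      ∀ (j : ℕ), 2 ≤ j →
      ∀ (u : ℕ → H) (p : ℕ → E) (P R : ℝ), 0 ≤ P → 0 ≤ R →
        (∀ i, 1 ≤ i → i ≤ j - 1 → ∀ ψ : H,
          ⟪(k ^ 2)⁻¹ • (u (i + 1) - (2 : ℝ) • u i + u (i - 1)), ψ⟫
              + β * ⟪ε (u (i + 1)), ε ψ⟫
            = -(1 - 2 * β) * ⟪ε (u i) - p i, ε ψ⟫
              - β * ⟪ε (u (i - 1)) - p (i - 1), ε ψ⟫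
              + β * ⟪p (i + 1), ε ψ⟫) →
        (∀ i ≤ j, ‖p i‖ ≤ P) →
        k * ∑ i ∈ Finset.range j, ‖k⁻¹ • (p (i + 1) - p i)‖ ^ 2 ≤ R →
        ‖k⁻¹ • (u j - u (j - 1))‖ ^ 2
            + k ^ 2 * ‖ε (k⁻¹ • (u j - u (j - 1)))‖ ^ 2
            + ‖ε (u j)‖ ^ 2
          ≤ C * (‖k⁻¹ • (u 1 - u 0)‖ ^ 2
              + k ^ 2 * ‖ε (k⁻¹ • (u 1 - u 0))‖ ^ 2
              + ‖ε (u 1)‖ ^ 2 + ‖ε (u 0)‖ ^ 2 + P ^ 2 + R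
              + k * ∑ i ∈ Finset.Icc 1 (j - 1), ‖ε (u i)‖ ^ 2) := by
  have hc : 0 < min (β - 1 / 4) (1 / 4) := lt_min (by linarith) (by norm_num)
  refine ⟨1, one_pos, 12 / min (β - 1 / 4) (1 / 4) ^ 2, by positivity, ?_⟩
  intro H E _ _ _ _ ε k hk hk₁ j hj u p P R _ _ hstep hp hR
  obtain ⟨n, rfl⟩ : ∃ n, j = n + 1 := ⟨j - 1, by omega⟩
  simp only [Nat.add_sub_cancel, map_smul, map_sub, sq_mul_norm_inv_smul hk.ne'] at hstep ⊢
  rw [div_mul_eq_mul_div, le_div_iff₀ (by positivity), mul_comm]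
  exact newmark_stability hk hk₁.le hβ hβ' hstep hp hR
end
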